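/- Let n ≥ 2 and ω = (n⁴−1)^{1/4}. Define in ℝ³ the vectors u₁ = (log|ω+n|, log|ω−n|, 2log√(ω²+n²)) and v₁ = (log|ω−n|, log|ω+n|, 2log√(ω²+n²)). Then ‖u₁‖ = ‖v₁‖, and the cosine of the angle θ between them satisfies cos θ → −1/7 as n → ∞; consequently the limit shape point cos θ + i sin θ tends to 1/7 + 4i√3/7. -/

import Mathlib

open Filter Topology InnerProductGeometry

/-- The vector `u₁(n)` of STATEMENT 16, with `ω = (n⁴−1)^{1/4}`. -/
noncomputable def uVec16 (n : ℕ) : EuclideanSpace ℝ (Fin 3) :=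
  (WithLp.equiv 2 (Fin 3 → ℝ)).symm
    ![Real.log |((n : ℝ) ^ 4 - 1) ^ ((1 : ℝ) / 4) + n|,
      Real.log |((n : ℝ) ^ 4 - 1) ^ ((1 : ℝ) / 4) - n|,
      2 * Real.log (Real.sqrt ((((n : ℝ) ^ 4 - 1) ^ ((1 : ℝ) / 4)) ^ 2 + (n : ℝ) ^ 2))]

/-- The vector `v₁(n)` of STATEMENT 16, with `ω = (n⁴−1)^{1/4}`. -/
noncomputable def vVec16 (n : ℕ) : EuclideanSpace ℝ (Fin 3) :=
  (WithLp.equiv 2 (Fin 3 → ℝ)).symm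
    ![Real.log |((n : ℝ) ^ 4 - 1) ^ ((1 : ℝ) / 4) - n|,
      Real.log |((n : ℝ) ^ 4 - 1) ^ ((1 : ℝ) / 4) + n|,
      2 * Real.log (Real.sqrt ((((n : ℝ) ^ 4 - 1) ^ ((1 : ℝ) / 4)) ^ 2 + (n : ℝ) ^ 2))]


noncomputable def omg16 (n : ℕ) : ℝ := ((n:ℝ)^4 - 1) ^ ((1:ℝ)/4)
noncomputable def aa16 (n : ℕ) : ℝ := Real.log (omg16 n + n)
noncomputable def bb16 (n : ℕ) : ℝ := Real.log ((n:ℝ) - omg16 n)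
noncomputable def cc16 (n : ℕ) : ℝ := Real.log (omg16 n ^ 2 + (n:ℝ)^2)

lemma omg16_facts (n : ℕ) (hn : 2 ≤ n) :
    omg16 n ^ 4 = (n:ℝ)^4 - 1 ∧ omg16 n < n ∧ 0 ≤ omg16 n := by
  have h1 : (1:ℝ) ≤ n := by exact_mod_cast Nat.one_le_of_lt hn
  have h : (0:ℝ) ≤ (n:ℝ)^4 - 1 := by nlinarith [pow_le_pow_left₀ (by norm_num : (0:ℝ) ≤ 1) h1 4]
  have h4 : omg16 n ^ 4 = (n:ℝ)^4 - 1 := by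
    rw [omg16, ← Real.rpow_natCast (((n:ℝ)^4-1) ^ ((1:ℝ)/4)) 4, ← Real.rpow_mul h]
    norm_num
  have h0 : 0 ≤ omg16 n := Real.rpow_nonneg h _
  refine ⟨h4, ?_, h0⟩
  have : omg16 n ^ 4 < (n:ℝ)^4 := by rw [h4]; linarith
  exact lt_of_pow_lt_pow_left₀ 4 (by positivity) this

lemma vec_eq (n : ℕ) (hn : 2 ≤ n) :
    (WithLp.equiv 2 (Fin 3 → ℝ)).symm
      ![Real.log |((n : ℝ) ^ 4 - 1) ^ ((1 : ℝ) / 4) + n|,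
        Real.log |((n : ℝ) ^ 4 - 1) ^ ((1 : ℝ) / 4) - n|,
        2 * Real.log (Real.sqrt ((((n : ℝ) ^ 4 - 1) ^ ((1 : ℝ) / 4)) ^ 2 + (n : ℝ) ^ 2))]
    = (WithLp.equiv 2 (Fin 3 → ℝ)).symm ![aa16 n, bb16 n, cc16 n] := by
  obtain ⟨h4, hlt, h0⟩ := omg16_facts n hn
  have h2 : (2:ℝ) ≤ n := by exact_mod_cast hn
  have e1 : |((n : ℝ) ^ 4 - 1) ^ ((1 : ℝ) / 4) + n| = omg16 n + n := by
    rw [abs_of_pos]; · rfl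
    · show (0:ℝ) < omg16 n + n; linarith
  have e2 : |((n : ℝ) ^ 4 - 1) ^ ((1 : ℝ) / 4) - n| = (n:ℝ) - omg16 n := by
    rw [abs_of_neg]; · show -(omg16 n - n) = _; ring
    · show omg16 n - (n:ℝ) < 0; linarith
  have e3 : 2 * Real.log (Real.sqrt ((((n : ℝ) ^ 4 - 1) ^ ((1 : ℝ) / 4)) ^ 2 + (n : ℝ) ^ 2))
      = cc16 n := by
    rw [Real.log_sqrt (by positivity)]; show 2 * (Real.log (omg16 n ^2 + (n:ℝ)^2) / 2) = _
    rw [cc16]; ring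
  rw [e1, e2, e3]; rfl

lemma abc16 (n : ℕ) (hn : 2 ≤ n) :
    aa16 n + bb16 n + cc16 n = 0 ∧
    Real.log n ≤ aa16 n ∧ aa16 n ≤ Real.log 2 + Real.log n ∧
    2 * Real.log n ≤ cc16 n ∧ cc16 n ≤ Real.log 2 + 2 * Real.log n ∧
    0 < Real.log n := by
  obtain ⟨h4, hlt, h0⟩ := omg16_facts n hn
  have h2 : (2:ℝ) ≤ n := by exact_mod_cast hn
  have hn1 : (1:ℝ) < n := by linarith
  have hearly : (0:ℝ) < Real.log n := Real.log_pos hn1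
  have hp1 : (0:ℝ) < omg16 n + n := by linarith
  have hp2 : (0:ℝ) < (n:ℝ) - omg16 n := by linarith
  have hp3 : (0:ℝ) < omg16 n ^2 + (n:ℝ)^2 := by positivity
  have hsum : aa16 n + bb16 n + cc16 n = 0 := by
    rw [aa16, bb16, cc16, ← Real.log_mul (ne_of_gt hp1) (ne_of_gt hp2),
      ← Real.log_mul (by positivity) (ne_of_gt hp3)]
    have : (omg16 n + n) * ((n:ℝ) - omg16 n) * (omg16 n ^2 + (n:ℝ)^2) = 1 := by
      linear_combination (-1:ℝ) * h4
    rw [this, Real.log_one]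
  refine ⟨hsum, ?_, ?_, ?_, ?_, hearly⟩
  · exact Real.log_le_log (by linarith) (by linarith)
  · rw [← Real.log_mul (by norm_num) (by linarith)]
    exact Real.log_le_log hp1 (by linarith)
  · rw [show 2 * Real.log n = Real.log ((n:ℝ)^2) by rw [Real.log_pow]; push_cast; ring]
    exact Real.log_le_log (by positivity) (by nlinarith)
  · rw [show Real.log 2 + 2*Real.log n = Real.log (2*(n:ℝ)^2) by
      rw [Real.log_mul (by norm_num) (by positivity), Real.log_pow]; push_cast; ring]
    exact Real.log_le_log hp3 (by nlinarith)

lemma vec_eq' (n : ℕ) (hn : 2 ≤ n) :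
    vVec16 n = (WithLp.equiv 2 (Fin 3 → ℝ)).symm ![bb16 n, aa16 n, cc16 n] := by
  obtain ⟨h4, hlt, h0⟩ := omg16_facts n hn
  have h2 : (2:ℝ) ≤ n := by exact_mod_cast hn
  have e1 : |((n : ℝ) ^ 4 - 1) ^ ((1 : ℝ) / 4) + n| = omg16 n + n := by
    rw [abs_of_pos]; · rfl
    · show (0:ℝ) < omg16 n + n; linarith
  have e2 : |((n : ℝ) ^ 4 - 1) ^ ((1 : ℝ) / 4) - n| = (n:ℝ) - omg16 n := by
    rw [abs_of_neg]; · show -(omg16 n - n) = _; ring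
    · show omg16 n - (n:ℝ) < 0; linarith
  have e3 : 2 * Real.log (Real.sqrt ((((n : ℝ) ^ 4 - 1) ^ ((1 : ℝ) / 4)) ^ 2 + (n : ℝ) ^ 2))
      = cc16 n := by
    rw [Real.log_sqrt (by positivity)]; show 2 * (Real.log (omg16 n ^2 + (n:ℝ)^2) / 2) = _
    rw [cc16]; ring
  rw [vVec16, e1, e2, e3]; rfl

lemma cos16 (n : ℕ) (hn : 2 ≤ n) :
    Real.cos (angle (uVec16 n) (vVec16 n)) =
      (2 * aa16 n * bb16 n + cc16 n ^ 2) / (aa16 n ^2 + bb16 n ^2 + cc16 n ^2) := by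
  obtain ⟨hsum, hla, hua, hlc, huc, hLpos⟩ := abc16 n hn
  have hapos : 0 < aa16 n := lt_of_lt_of_le hLpos hla
  have hu : uVec16 n = (WithLp.equiv 2 (Fin 3 → ℝ)).symm ![aa16 n, bb16 n, cc16 n] :=
    vec_eq n hn
  have hv : vVec16 n = (WithLp.equiv 2 (Fin 3 → ℝ)).symm ![bb16 n, aa16 n, cc16 n] :=
    vec_eq' n hn
  rw [cos_angle, hu, hv]
  have hi : (inner ℝ ((WithLp.equiv 2 (Fin 3 → ℝ)).symm ![aa16 n, bb16 n, cc16 n])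
      ((WithLp.equiv 2 (Fin 3 → ℝ)).symm ![bb16 n, aa16 n, cc16 n]) : ℝ)
      = 2 * aa16 n * bb16 n + cc16 n ^2 := by
    simp [PiLp.inner_apply, Fin.sum_univ_three, RCLike.inner_apply]
    ring
  have hs : (0:ℝ) ≤ aa16 n ^2 + bb16 n ^2 + cc16 n ^2 := by positivity
  have hnu : ‖(WithLp.equiv 2 (Fin 3 → ℝ)).symm ![aa16 n, bb16 n, cc16 n]‖
      = Real.sqrt (aa16 n ^2 + bb16 n ^2 + cc16 n ^2) := by
    simp [EuclideanSpace.norm_eq, Fin.sum_univ_three]; try ring_nf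
  have hnv : ‖(WithLp.equiv 2 (Fin 3 → ℝ)).symm ![bb16 n, aa16 n, cc16 n]‖
      = Real.sqrt (aa16 n ^2 + bb16 n ^2 + cc16 n ^2) := by
    simp [EuclideanSpace.norm_eq, Fin.sum_univ_three]; try ring_nf
  rw [hi, hnu, hnv, Real.mul_self_sqrt hs]


/-- `‖u₁‖ = ‖v₁‖`, the cosine of the angle `θ` between `u₁` and `v₁`
tends to `−1/7`, and consequently the limit shape point tends to `1/7 + 4i√3/7`. -/
theorem cos_angle_tendsto_neg_one_seventh :
    (∀ n : ℕ, 2 ≤ n → ‖uVec16 n‖ = ‖vVec16 n‖) ∧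
    Tendsto (fun n : ℕ => Real.cos (angle (uVec16 n) (vVec16 n))) atTop (𝓝 (-(1 / 7))) ∧
    Tendsto (fun n : ℕ =>
        ((|Real.cos (angle (uVec16 n) (vVec16 n))| : ℝ) : ℂ) +
          (Real.sin (angle (uVec16 n) (vVec16 n)) : ℂ) * Complex.I)
      atTop (𝓝 (1 / 7 + (4 * Real.sqrt 3 / 7 : ℝ) * Complex.I)) := by
  -- limits of a/L, c/L, b/L
  have hL : Tendsto (fun n:ℕ => Real.log n) atTop atTop :=
    Real.tendsto_log_atTop.comp tendsto_natCast_atTop_atTop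
  have hzero : Tendsto (fun n:ℕ => Real.log 2 / Real.log n) atTop (𝓝 0) := by
    simpa [div_eq_mul_inv] using hL.inv_tendsto_atTop.const_mul (Real.log 2)
  have hev : ∀ᶠ n : ℕ in atTop, 2 ≤ n := eventually_ge_atTop 2
  have hA : Tendsto (fun n:ℕ => aa16 n / Real.log n) atTop (𝓝 1) := by
    apply tendsto_of_tendsto_of_tendsto_of_le_of_le' (tendsto_const_nhds (x := (1:ℝ)))
      (by simpa using tendsto_const_nhds (x := (1:ℝ)) |>.add hzero :
        Tendsto (fun n:ℕ => 1 + Real.log 2 / Real.log n) atTop (𝓝 1))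
    · filter_upwards [hev] with n hn
      obtain ⟨_, hla, _, _, _, hLpos⟩ := abc16 n hn
      rw [le_div_iff₀ hLpos]; linarith
    · filter_upwards [hev] with n hn
      obtain ⟨_, _, hua, _, _, hLpos⟩ := abc16 n hn
      rw [div_le_iff₀ hLpos, add_mul, div_mul_cancel₀ _ (ne_of_gt hLpos), one_mul]; linarith
  have hC : Tendsto (fun n:ℕ => cc16 n / Real.log n) atTop (𝓝 2) := by
    apply tendsto_of_tendsto_of_tendsto_of_le_of_le' (tendsto_const_nhds (x := (2:ℝ)))
      (by simpa using tendsto_const_nhds (x := (2:ℝ)) |>.add hzero :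
        Tendsto (fun n:ℕ => 2 + Real.log 2 / Real.log n) atTop (𝓝 2))
    · filter_upwards [hev] with n hn
      obtain ⟨_, _, _, hlc, _, hLpos⟩ := abc16 n hn
      rw [le_div_iff₀ hLpos]; linarith
    · filter_upwards [hev] with n hn
      obtain ⟨_, _, _, _, huc, hLpos⟩ := abc16 n hn
      rw [div_le_iff₀ hLpos, add_mul, div_mul_cancel₀ _ (ne_of_gt hLpos)]; linarith
  have hB : Tendsto (fun n:ℕ => bb16 n / Real.log n) atTop (𝓝 (-3)) := by
    have h := ((hA.add hC).neg : Tendsto (fun n:ℕ =>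
        -(aa16 n / Real.log n + cc16 n / Real.log n)) atTop (𝓝 (-(1+2))))
    rw [show -((1:ℝ)+2) = -3 by norm_num] at h
    apply h.congr'
    filter_upwards [hev] with n hn
    obtain ⟨hsum, _, _, _, _, hLpos⟩ := abc16 n hn
    have hb : bb16 n = -(aa16 n + cc16 n) := by linarith
    rw [hb, neg_div, add_div]
  -- cos limit
  have hcos : Tendsto (fun n : ℕ => Real.cos (angle (uVec16 n) (vVec16 n))) atTop
      (𝓝 (-(1 / 7))) := by
    have hnum : Tendsto (fun n:ℕ => 2 * (aa16 n / Real.log n) * (bb16 n / Real.log n)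
        + (cc16 n / Real.log n)^2) atTop (𝓝 (2 * 1 * (-3) + 2^2)) :=
      (((hA.const_mul 2).mul hB).add (hC.pow 2))
    have hden : Tendsto (fun n:ℕ => (aa16 n / Real.log n)^2 + (bb16 n / Real.log n)^2
        + (cc16 n / Real.log n)^2) atTop (𝓝 (1^2 + (-3:ℝ)^2 + 2^2)) :=
      (((hA.pow 2).add (hB.pow 2)).add (hC.pow 2))
    have h := hnum.div hden (by norm_num)
    norm_num at h
    apply h.congr'
    filter_upwards [hev] with n hn
    simp only [Pi.div_apply]
    obtain ⟨hsum, hla, _, _, _, hLpos⟩ := abc16 n hn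
    have hapos : 0 < aa16 n := lt_of_lt_of_le hLpos hla
    have hs : (0:ℝ) < aa16 n ^2 + bb16 n ^2 + cc16 n ^2 := by positivity
    rw [cos16 n hn]
    rw [div_eq_div_iff]
    · ring
    · positivity
    · exact ne_of_gt hs
  refine ⟨?_, hcos, ?_⟩
  · intro n hn
    simp [uVec16, vVec16, EuclideanSpace.norm_eq, Fin.sum_univ_three]
    ring_nf
  -- complex limit
  · have hsin_eq : ∀ n : ℕ, Real.sin (angle (uVec16 n) (vVec16 n)) =
        Real.sqrt (1 - Real.cos (angle (uVec16 n) (vVec16 n)) ^ 2) := by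
      intro n
      rw [← Real.sin_sq, Real.sqrt_sq (Real.sin_nonneg_of_nonneg_of_le_pi (angle_nonneg _ _) (angle_le_pi _ _))]
    have h3 : Real.sqrt 3 ^ 2 = 3 := Real.sq_sqrt (by norm_num)
    have hval : Real.sqrt (1 - (-(1/7):ℝ)^2) = 4 * Real.sqrt 3 / 7 := by
      have : (1:ℝ) - (-(1/7):ℝ)^2 = (4 * Real.sqrt 3 / 7)^2 := by nlinarith
      rw [this, Real.sqrt_sq (by positivity)]
    have hsin : Tendsto (fun n : ℕ => Real.sin (angle (uVec16 n) (vVec16 n))) atTop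
        (𝓝 (4 * Real.sqrt 3 / 7)) := by
      have h2 : Tendsto (fun n:ℕ => 1 - Real.cos (angle (uVec16 n) (vVec16 n))^2) atTop
          (𝓝 (1 - (-(1/7):ℝ)^2)) := tendsto_const_nhds.sub (hcos.pow 2)
      have := (Real.continuous_sqrt.tendsto _).comp h2
      rw [hval] at this
      exact Tendsto.congr (fun n => (hsin_eq n).symm) this
    have habs : Tendsto (fun n : ℕ => |Real.cos (angle (uVec16 n) (vVec16 n))|) atTop
        (𝓝 (1/7)) := by
      have h := hcos.abs
      rw [show |(-(1/7):ℝ)| = 1/7 by norm_num] at h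
      exact h
    have hc1 := (Complex.continuous_ofReal.tendsto _).comp habs
    have hc2 := ((Complex.continuous_ofReal.tendsto _).comp hsin).mul_const Complex.I
    have := hc1.add hc2
    convert this using 2
    · simp only [Function.comp_apply]
    · norm_num
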